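/- arXiv:2603.25151 — 2 statements merged into one kernel-verified Lean document; each statement's English description precedes it below -/
import Mathlib

section
/- Let μ be a Borel probability measure on ℝ, let f : ℝ → ℂ be a bounded Borel measurable function, and let u ∈ Ĥ. Then the function x ↦ ⟨Ŝ_x u, M_f (Ŝ_x u)⟩ is μ-integrable and ∫_ℝ ⟨Ŝ_x u, M_f (Ŝ_x u)⟩ dμ(x) = ⟨u, M_g u⟩, where g : ℝ → ℂ is the bounded Borel function g(p) = ∫_ℝ f(p − x) dμ(x). That is, the averaged unitary shift channel acts on multiplication observables M_f by replacing f with its convolution-average g. -/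
open MeasureTheory Complex Filter
open scoped ComplexConjugate ENNReal Classical

noncomputable section

/-- `Ĥ = L²(ℝ, ν; ℂ)`: the Hilbert space of complex-valued functions on `ℝ` that are
square-summable with respect to the counting measure, realized as `lp (fun _ : ℝ => ℂ) 2`
(functions with countable support and square-summable values), with inner product
`⟪u, v⟫ = ∑' x, conj (u x) * v x`, conjugate-linear in the first argument. -/
abbrev Hhat : Type := lp (fun _ : ℝ => ℂ) 2

lemma memℓp_shift (h : ℝ) (u : Hhat) : Memℓp (fun x : ℝ => u (x + h)) 2 := by
  refine memℓp_gen ?_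
  have hs : Summable fun x : ℝ => ‖u x‖ ^ (2 : ℝ≥0∞).toReal :=
    (lp.memℓp u).summable (by norm_num)
  exact ((Equiv.addRight h).summable_iff
    (f := fun x : ℝ => ‖u x‖ ^ (2 : ℝ≥0∞).toReal)).mpr hs

/-- The shift operator `Ŝ_h` on `Ĥ`, `(Ŝ_h u) x = u (x + h)`. -/
def Shat (h : ℝ) (u : Hhat) : Hhat := ⟨fun x : ℝ => u (x + h), memℓp_shift h u⟩

lemma memℓp_mul_of_le {g : ℝ → ℂ} {C : ℝ} (hg : ∀ x, ‖g x‖ ≤ C) (u : Hhat) :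
    Memℓp (fun x : ℝ => g x * u x) 2 := by
  refine memℓp_gen ?_
  have hs : Summable fun x : ℝ => ‖u x‖ ^ (2 : ℝ≥0∞).toReal :=
    (lp.memℓp u).summable (by norm_num)
  have h2 : (2 : ℝ≥0∞).toReal = (2 : ℝ) := by norm_num
  rw [h2] at hs ⊢
  refine Summable.of_nonneg_of_le (fun x => by positivity) (fun x => ?_) (hs.mul_left (C ^ 2))
  calc ‖g x * u x‖ ^ (2 : ℝ) = ‖g x‖ ^ (2 : ℝ) * ‖u x‖ ^ (2 : ℝ) := by
        rw [norm_mul, Real.mul_rpow (norm_nonneg _) (norm_nonneg _)]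
    _ ≤ C ^ (2 : ℝ) * ‖u x‖ ^ (2 : ℝ) := by gcongr; exact hg x
    _ = C ^ 2 * ‖u x‖ ^ (2 : ℝ) := by rw [Real.rpow_two]

/-- The modulation operator `M̂_a` on `Ĥ`, `(M̂_a u) x = e^{iax} u x`. -/
def Mhat (a : ℝ) (u : Hhat) : Hhat :=
  ⟨fun x : ℝ => Complex.exp ((a * x : ℝ) * Complex.I) * u x,
    memℓp_mul_of_le (C := 1) (fun x => le_of_eq (Complex.norm_exp_ofReal_mul_I _)) u⟩

/-- Multiplication `M_f u` of an element of `Ĥ` by a function `f : ℝ → ℂ`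
(with junk value `0` in case the product fails to be square-summable; for bounded `f`
the `dite` always takes the first branch). -/
def mulElem (f : ℝ → ℂ) (u : Hhat) : Hhat :=
  if h : Memℓp (fun x : ℝ => f x * u x) 2 then ⟨_, h⟩ else 0

/-! Writing `Ŝ_x u` out, `⟨Ŝ_x u, M_f Ŝ_x u⟩ = ∑_q f(q - x) |u q|²`, a series whose terms are
bounded by the summable `C |u q|²` uniformly in `x`. Dominated convergence for series lets us
integrate term by term, giving `∑_q g(q) |u q|² = ⟨u, M_g u⟩`. -/

section SeriesOfUniformlyBoundedFunctions

variable {α ι E : Type*} [NormedAddCommGroup E] {F : ι → α → E} {b : ι → ℝ}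

lemma eq_zero_of_norm_le_of_notMem_support (hFb : ∀ i x, ‖F i x‖ ≤ b i) {i : ι}
    (hi : i ∉ Function.support b) : F i = 0 := by
  ext x
  simpa [Function.notMem_support.mp hi] using hFb i x

lemma tsum_eq_tsum_support_of_norm_le (hFb : ∀ i x, ‖F i x‖ ≤ b i) (x : α) :
    ∑' i, F i x = ∑' i : Function.support b, F i x :=
  (tsum_subtype_eq_of_support_subset <| Function.support_subset_iff'.mpr fun i hi => by
    rw [eq_zero_of_norm_le_of_notMem_support hFb hi, Pi.zero_apply]).symm

variable [MeasurableSpace α] {μ : Measure α} [IsFiniteMeasure μ] [CompleteSpace E]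

lemma integrable_tsum_of_norm_le_of_countable [Countable ι]
    (hF : ∀ i, AEStronglyMeasurable (F i) μ) (hb : Summable b) (hFb : ∀ i x, ‖F i x‖ ≤ b i) :
    Integrable (fun x => ∑' i, F i x) μ := by
  have hsum (x : α) : Summable fun i => F i x := hb.of_norm_bounded (hFb · x)
  have hmeas : AEStronglyMeasurable (fun x => ∑' i, F i x) μ :=
    aestronglyMeasurable_of_tendsto_ae atTop
      (fun s => Finset.aestronglyMeasurable_fun_sum s fun i _ => hF i)
      (ae_of_all μ fun x => (hsum x).hasSum)
  exact .mono' (integrable_const (∑' i, b i)) hmeas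
    (ae_of_all μ fun x => tsum_of_norm_bounded hb.hasSum (hFb · x))

lemma integral_tsum_of_norm_le_of_countable [NormedSpace ℝ E] [Countable ι]
    (hF : ∀ i, AEStronglyMeasurable (F i) μ) (hb : Summable b) (hFb : ∀ i x, ‖F i x‖ ≤ b i) :
    ∫ x, ∑' i, F i x ∂μ = ∑' i, ∫ x, F i x ∂μ :=
  (hasSum_integral_of_dominated_convergence (fun i _ => b i) hF
    (fun i => ae_of_all μ (hFb i)) (ae_of_all μ fun _ => hb) (integrable_const _)
    (ae_of_all μ fun x => (hb.of_norm_bounded (hFb · x)).hasSum)).tsum_eq.symm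

theorem integrable_tsum_of_norm_le
    (hF : ∀ i, AEStronglyMeasurable (F i) μ) (hb : Summable b) (hFb : ∀ i x, ‖F i x‖ ≤ b i) :
    Integrable (fun x => ∑' i, F i x) μ := by
  -- measurability of the sum needs a countable index set: pass to the support of `b`
  have := hb.countable_support.to_subtype
  simp_rw [tsum_eq_tsum_support_of_norm_le hFb]
  exact integrable_tsum_of_norm_le_of_countable (fun i => hF i) (hb.subtype _) (fun i => hFb i)

theorem integral_tsum_of_norm_le [NormedSpace ℝ E]
    (hF : ∀ i, AEStronglyMeasurable (F i) μ) (hb : Summable b) (hFb : ∀ i x, ‖F i x‖ ≤ b i) :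
    ∫ x, ∑' i, F i x ∂μ = ∑' i, ∫ x, F i x ∂μ := by
  have := hb.countable_support.to_subtype
  simp_rw [tsum_eq_tsum_support_of_norm_le hFb]
  rw [integral_tsum_of_norm_le_of_countable (F := fun i : Function.support b => F i)
    (fun i => hF i) (hb.subtype _) (fun i => hFb i)]
  refine tsum_subtype_eq_of_support_subset (f := fun i => ∫ x, F i x ∂μ) <|
    Function.support_subset_iff'.mpr fun i hi => ?_
  rw [eq_zero_of_norm_le_of_notMem_support hFb hi, Pi.zero_def, integral_zero]

end SeriesOfUniformlyBoundedFunctions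

lemma mulElem_apply {f : ℝ → ℂ} {C : ℝ} (hC : ∀ x, ‖f x‖ ≤ C) (v : Hhat) (p : ℝ) :
    mulElem f v p = f p * v p := by
  rw [mulElem, dif_pos (memℓp_mul_of_le hC v)]

lemma inner_mulElem_self {f : ℝ → ℂ} {C : ℝ} (hC : ∀ x, ‖f x‖ ≤ C) (v : Hhat) :
    inner ℂ v (mulElem f v) = ∑' p, f p * ‖v p‖ ^ 2 := by
  rw [lp.inner_eq_tsum]
  refine tsum_congr fun p => ?_
  rw [RCLike.inner_apply', mulElem_apply hC, mul_left_comm, Complex.conj_mul']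

lemma inner_shat_mulElem_shat {f : ℝ → ℂ} {C : ℝ} (hC : ∀ x, ‖f x‖ ≤ C) (h : ℝ) (u : Hhat) :
    inner ℂ (Shat h u) (mulElem f (Shat h u)) = ∑' q, f (q - h) * ‖u q‖ ^ 2 := by
  rw [inner_mulElem_self hC, ← (Equiv.addRight h).tsum_eq fun q => f (q - h) * ‖u q‖ ^ 2]
  simp [Shat]

lemma summable_norm_sq (u : Hhat) : Summable fun p => ‖u p‖ ^ 2 := by
  simpa using (lp.memℓp u).summable (by norm_num : 0 < (2 : ℝ≥0∞).toReal)

lemma norm_integral_comp_sub_le {f : ℝ → ℂ} {C : ℝ} (hC : ∀ x, ‖f x‖ ≤ C)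
    (μ : Measure ℝ) [IsProbabilityMeasure μ] (p : ℝ) : ‖∫ x, f (p - x) ∂μ‖ ≤ C := by
  simpa using norm_integral_le_of_norm_le_const (μ := μ) (ae_of_all μ fun x => hC (p - x))

/-- let `μ` be a Borel probability measure on `ℝ`, `f : ℝ → ℂ` a bounded Borel
function and `u ∈ Ĥ`. Then `x ↦ ⟨Ŝ_x u, M_f (Ŝ_x u)⟩` is `μ`-integrable and
`∫ ⟨Ŝ_x u, M_f (Ŝ_x u)⟩ dμ(x) = ⟨u, M_g u⟩` where `g(p) = ∫ f(p − x) dμ(x)`: the averaged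
unitary shift channel acts on multiplication observables by convolution-averaging. -/
theorem averaged_shift_channel_on_multiplication_observables
    (μ : Measure ℝ) [IsProbabilityMeasure μ]
    (f : ℝ → ℂ) (hf : Measurable f) (C : ℝ) (hC : ∀ x, ‖f x‖ ≤ C) (u : Hhat) :
    Integrable (fun x : ℝ => (inner ℂ (Shat x u) (mulElem f (Shat x u)) : ℂ)) μ ∧
    ∫ x, (inner ℂ (Shat x u) (mulElem f (Shat x u)) : ℂ) ∂μ
      = (inner ℂ u (mulElem (fun p : ℝ => ∫ x, f (p - x) ∂μ) u) : ℂ) := by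
  have hF (q : ℝ) : AEStronglyMeasurable (fun x => f (q - x) * (‖u q‖ ^ 2 : ℂ)) μ :=
    ((hf.comp (measurable_const.sub measurable_id)).mul_const _).aestronglyMeasurable
  have hb : Summable fun q => C * ‖u q‖ ^ 2 := (summable_norm_sq u).mul_left C
  have hFb (q x : ℝ) : ‖f (q - x) * (‖u q‖ ^ 2 : ℂ)‖ ≤ C * ‖u q‖ ^ 2 := by
    rw [norm_mul, ← Complex.ofReal_pow, Complex.norm_of_nonneg (by positivity)]
    exact mul_le_mul_of_nonneg_right (hC _) (by positivity)
  simp_rw [inner_shat_mulElem_shat hC, inner_mulElem_self (norm_integral_comp_sub_le hC μ)]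
  refine ⟨integrable_tsum_of_norm_le hF hb hFb, ?_⟩
  simp_rw [integral_tsum_of_norm_le hF hb hFb, integral_mul_const]

end
end

section
/- Let μ be a Borel probability measure on ℝ, let m be a finite complex Borel measure on ℝ, and let u ∈ Ĥ. Then ∫_ℝ ∫_ℝ ⟨Ŝ_x u, Ŝ_a (Ŝ_x u)⟩ dm(a) dμ(x) = ∫_ℝ ⟨u, Ŝ_a u⟩ dm(a); that is, the averaged shift channel leaves invariant the value of the state on every observable of convolution type A = ∫ Ŝ_a dm(a). Moreover, if m has no atoms (m({a}) = 0 for every a ∈ ℝ), then ∫_ℝ ⟨u, Ŝ_a u⟩ dm(a) = 0. -/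
/-!
Shifts are unitary and commute with each other, so `⟪Ŝ_x u, Ŝ_a (Ŝ_x u)⟫ = ⟪u, Ŝ_a u⟫` for
every `x` and the `μ`-average is trivial. For the second part, `u` has countable support, so
`a ↦ ⟪u, Ŝ_a u⟫` vanishes off the countable difference set `supp u - supp u`; when `m` has no
atoms, neither do the four Jordan parts of its real and imaginary parts, and a countable set is
null for each of them.
-/

open MeasureTheory Complex Filter
open scoped ComplexConjugate ENNReal Classical

noncomputable section

/-- The integral `∫ f dm` of a (bounded) function against a finite complex Borel measure `m`,
via the Jordan decompositions of the real and imaginary parts of `m`. -/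
def integralCM (m : MeasureTheory.ComplexMeasure ℝ) (f : ℝ → ℂ) : ℂ :=
  ((∫ a, f a ∂(ComplexMeasure.re m).toJordanDecomposition.posPart)
      - ∫ a, f a ∂(ComplexMeasure.re m).toJordanDecomposition.negPart)
    + Complex.I *
      ((∫ a, f a ∂(ComplexMeasure.im m).toJordanDecomposition.posPart)
        - ∫ a, f a ∂(ComplexMeasure.im m).toJordanDecomposition.negPart)

theorem Memℓp.countable_support {α : Type*} {E : α → Type*} [∀ i, NormedAddCommGroup (E i)]
    {f : ∀ i, E i} {p : ℝ≥0∞} (hf : Memℓp f p) (hp : 0 < p.toReal) :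
    {i | f i ≠ 0}.Countable :=
  (hf.summable hp).countable_support.mono fun x hx => by
    simpa [Function.mem_support, hp.ne'] using hx

lemma Shat_apply (h : ℝ) (u : Hhat) (x : ℝ) : Shat h u x = u (x + h) := rfl

lemma Shat_comm (a b : ℝ) (u : Hhat) : Shat a (Shat b u) = Shat b (Shat a u) := by
  ext x
  simp only [Shat_apply, add_right_comm]

lemma inner_Shat_Shat (h : ℝ) (u v : Hhat) :
    (inner ℂ (Shat h u) (Shat h v) : ℂ) = inner ℂ u v := by
  simp only [lp.inner_eq_tsum, Shat_apply]
  exact (Equiv.addRight h).tsum_eq fun x => (inner ℂ (u x) (v x) : ℂ)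

lemma inner_Shat_Shat_Shat (x a : ℝ) (u : Hhat) :
    (inner ℂ (Shat x u) (Shat a (Shat x u)) : ℂ) = inner ℂ u (Shat a u) := by
  rw [Shat_comm, inner_Shat_Shat]

lemma support_inner_Shat_subset (u v : Hhat) :
    (Function.support fun a => (inner ℂ u (Shat a v) : ℂ)) ⊆
      Set.image2 (fun s t => t - s) (Function.support u) (Function.support v) := by
  intro a ha
  obtain ⟨x, hux, hvx⟩ : ∃ x, u x ≠ 0 ∧ v (x + a) ≠ 0 := by
    by_contra! h
    rw [Function.mem_support, lp.inner_eq_tsum] at ha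
    refine ha ((tsum_congr fun x => ?_).trans tsum_zero)
    by_cases hx : u x = 0 <;> simp [Shat_apply, hx, h]
  exact ⟨x, hux, x + a, hvx, by ring⟩

lemma countable_support_inner_Shat (u v : Hhat) :
    (Function.support fun a => (inner ℂ u (Shat a v) : ℂ)).Countable := by
  have hcount : ∀ w : Hhat, (Function.support w).Countable := fun w =>
    Memℓp.countable_support (lp.memℓp w) (by norm_num)
  exact ((hcount u).image2 (hcount v) _).mono (support_inner_Shat_subset u v)

theorem MeasureTheory.integral_eq_zero_of_countable_support {α E : Type*} [MeasurableSpace α]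
    [NormedAddCommGroup E] [NormedSpace ℝ E] (ν : Measure α) [NullSingletonClass ν]
    {f : α → E} (hf : (Function.support f).Countable) : ∫ a, f a ∂ν = 0 :=
  integral_eq_zero_of_ae (ae_iff.2 (hf.measure_zero ν))

theorem MeasureTheory.SignedMeasure.totalVariation_eq_zero_of_forall_subset {α : Type*}
    [MeasurableSpace α] (s : SignedMeasure α) {S : Set α} (hS : MeasurableSet S)
    (h : ∀ T ⊆ S, s T = 0) : s.totalVariation S = 0 := by
  obtain ⟨i, hi, hi₂, hi₃, hpos, hneg⟩ := s.toJordanDecomposition_spec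
  have hpos_zero : s.toJordanDecomposition.posPart.real S = 0 := by
    rw [hpos, toMeasureOfZeroLE_real_apply _ hi₂ hi hS, h _ Set.inter_subset_right]
  have hneg_zero : s.toJordanDecomposition.negPart.real S = 0 := by
    rw [hneg, toMeasureOfLEZero_real_apply _ hi₃ hi.compl hS, h _ Set.inter_subset_right,
      neg_zero]
  rw [measureReal_eq_zero_iff] at hpos_zero hneg_zero
  rw [totalVariation, Measure.add_apply, hpos_zero, hneg_zero, add_zero]

theorem MeasureTheory.SignedMeasure.integral_posPart_sub_integral_negPart_eq_zero {α E : Type*}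
    [MeasurableSpace α] [MeasurableSingletonClass α] [NormedAddCommGroup E] [NormedSpace ℝ E]
    (s : SignedMeasure α) (hs : ∀ a, s {a} = 0) {f : α → E}
    (hf : (Function.support f).Countable) :
    (∫ a, f a ∂s.toJordanDecomposition.posPart) - ∫ a, f a ∂s.toJordanDecomposition.negPart
      = 0 := by
  have hatom (a : α) : s.totalVariation {a} = 0 :=
    s.totalVariation_eq_zero_of_forall_subset (measurableSet_singleton a) fun T hT => by
      rcases Set.subset_singleton_iff_eq.1 hT with rfl | rfl
      exacts [s.empty, hs a]
  have : NullSingletonClass s.toJordanDecomposition.posPart :=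
    ⟨fun a => (add_eq_zero.1 (hatom a)).1⟩
  have : NullSingletonClass s.toJordanDecomposition.negPart :=
    ⟨fun a => (add_eq_zero.1 (hatom a)).2⟩
  rw [integral_eq_zero_of_countable_support _ hf, integral_eq_zero_of_countable_support _ hf,
    sub_zero]

lemma integralCM_eq_zero_of_countable_support (m : ComplexMeasure ℝ) (hm : ∀ a, m {a} = 0)
    {f : ℝ → ℂ} (hf : (Function.support f).Countable) : integralCM m f = 0 := by
  have hre (a : ℝ) : ComplexMeasure.re m {a} = 0 := congrArg Complex.re (hm a)
  have him (a : ℝ) : ComplexMeasure.im m {a} = 0 := congrArg Complex.im (hm a)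
  rw [integralCM, SignedMeasure.integral_posPart_sub_integral_negPart_eq_zero _ hre hf,
    SignedMeasure.integral_posPart_sub_integral_negPart_eq_zero _ him hf, mul_zero, add_zero]

/-- let `μ` be a Borel probability measure on `ℝ`, `m` a finite complex Borel
measure on `ℝ`, and `u ∈ Ĥ`. Then
`∫∫ ⟨Ŝ_x u, Ŝ_a (Ŝ_x u)⟩ dm(a) dμ(x) = ∫ ⟨u, Ŝ_a u⟩ dm(a)`: the averaged shift channel
leaves invariant the value of the state on every observable of convolution type
`A = ∫ Ŝ_a dm(a)`. Moreover, if `m` has no atoms then `∫ ⟨u, Ŝ_a u⟩ dm(a) = 0`. -/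
theorem averaged_shift_channel_on_convolution_observables
    (μ : Measure ℝ) [IsProbabilityMeasure μ] (m : MeasureTheory.ComplexMeasure ℝ)
    (u : Hhat) :
    (∫ x, integralCM m (fun a => (inner ℂ (Shat x u) (Shat a (Shat x u)) : ℂ)) ∂μ
      = integralCM m (fun a => (inner ℂ u (Shat a u) : ℂ))) ∧
    ((∀ a : ℝ, m {a} = 0) →
      integralCM m (fun a => (inner ℂ u (Shat a u) : ℂ)) = 0) := by
  constructor
  · simp only [inner_Shat_Shat_Shat, integral_const, probReal_univ, one_smul]
  · exact fun hm => integralCM_eq_zero_of_countable_support m hm (countable_support_inner_Shat u u)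

end
end
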